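/- Let ξ₁, ξ₂, … be i.i.d. real-valued random variables with common distribution function F_ξ ∈ 𝒞, and let η be a counting random variable independent of the ξ's with E η < ∞. Then the distribution function of the randomly stopped maximum ξ_{(η)} = max{0, ξ₁, …, ξ_η} belongs to 𝒞. -/

import Mathlib

/-! Conditioning on `η` gives `P(ξ_(η) > x) = ∑ₙ P(η = n) (1 - F(x)ⁿ)` for `x ≥ 0`, and
`1 - Fⁿ = F̄ (1 + F + ⋯ + Fⁿ⁻¹)`, so dominated convergence (dominated by `n P(η = n)`) gives
`P(ξ_(η) > x) ~ E η · F̄(x)` with `E η > 0`. Consistent variation survives such a tail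
equivalence: `T(xy)/T(x)` differs from `F̄(xy)/F̄(x)` by a factor tending to `1`. -/

open Filter MeasureTheory ProbabilityTheory Topology Finset

/-- `T` is a consistently varying tail function: `lim_{y↑1} limsup_{x→∞} T(xy)/T(x) = 1`. -/
def ConsistentlyVaryingTail (T : ℝ → ℝ) : Prop :=
  Tendsto (fun y : ℝ => limsup (fun x : ℝ => T (x * y) / T x) atTop)
    (nhdsWithin 1 (Set.Iio 1)) (nhds 1)

/-- `runningMax ξ n ω = max {0, ξ 1 ω, …, ξ n ω}`. -/
noncomputable def runningMax {Ω : Type*} (ξ : ℕ → Ω → ℝ) : ℕ → Ω → ℝ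
  | 0 => fun _ => 0
  | n + 1 => fun ω => max (runningMax ξ n ω) (ξ (n + 1) ω)

theorem limsup_mul_eq_of_tendsto_one {ι : Type*} {f : Filter ι} [f.NeBot] {u v : ι → ℝ}
    (hu : 0 < limsup u f) (hv : Tendsto v f (𝓝 1)) :
    limsup (u * v) f = limsup u f := by
  have hbdd : IsBoundedUnder (· ≤ ·) f u := by
    by_contra h
    exact hu.ne' (Real.limsup_of_not_isBoundedUnder h)
  have hcobdd : IsCoboundedUnder (· ≤ ·) f u := by
    by_contra h
    exact hu.ne' (Real.limsup_of_not_isCoboundedUnder h)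
  have hu0 : ∃ᶠ i in f, 0 ≤ u i := (frequently_lt_of_lt_limsup hcobdd hu).mono fun _ h => h.le
  have hv0 : 0 ≤ᶠ[f] v := (hv.eventually (lt_mem_nhds one_pos)).mono fun _ h => h.le
  apply le_antisymm
  · simpa [hv.limsup_eq] using limsup_mul_le hu0 hbdd hv0 hv.isBoundedUnder_le
  · simpa [hv.liminf_eq] using le_limsup_mul hu0 hbdd hv0 hv.isBoundedUnder_le

theorem ConsistentlyVaryingTail.of_tendsto_div {G T : ℝ → ℝ} {c : ℝ}
    (hG : ConsistentlyVaryingTail G) (hc : c ≠ 0)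
    (hTG : Tendsto (fun x => T x / G x) atTop (𝓝 c)) : ConsistentlyVaryingTail T := by
  refine hG.congr' ?_
  filter_upwards [hG.eventually (lt_mem_nhds one_pos),
    mem_nhdsWithin_of_mem_nhds (lt_mem_nhds one_pos)] with y hlimsup hy
  have hxy : Tendsto (fun x => x * y) atTop atTop := tendsto_id.atTop_mul_const hy
  have hratio : Tendsto (fun x => T (x * y) / G (x * y) / (T x / G x)) atTop (𝓝 1) := by
    rw [← div_self hc]
    exact (hTG.comp hxy).div hTG hc
  rw [← limsup_mul_eq_of_tendsto_one hlimsup hratio]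
  refine limsup_congr ?_
  have hne := hTG.eventually_ne hc
  filter_upwards [hne, hxy.eventually hne] with x hx hxy
  rw [div_ne_zero_iff] at hx hxy
  simp only [Pi.mul_apply]
  field_simp [hx.1, hx.2, hxy.1, hxy.2]

theorem tendsto_tsum_mul_geom_sum {α : Type*} {l : Filter α} {p : ℕ → ℝ} {F : α → ℝ}
    (hp : ∀ n, 0 ≤ p n) (hmean : Summable fun n : ℕ => (n : ℝ) * p n)
    (hF : ∀ a, F a ∈ Set.Icc 0 1) (hF1 : Tendsto F l (𝓝 1)) :
    Tendsto (fun a => ∑' n, p n * ∑ k ∈ range n, F a ^ k) l (𝓝 (∑' n : ℕ, (n : ℝ) * p n)) := by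
  refine tendsto_tsum_of_dominated_convergence hmean (fun n => ?_) (.of_forall fun a n => ?_)
  · have hgeom : Tendsto (fun a => ∑ k ∈ range n, F a ^ k) l (𝓝 (∑ k ∈ range n, (1 : ℝ) ^ k)) :=
      tendsto_finsetSum _ fun k _ => hF1.pow k
    simpa [mul_comm] using hgeom.const_mul (p n)
  · obtain ⟨h0, h1⟩ := hF a
    have hgeom : ∑ k ∈ range n, F a ^ k ≤ n := by
      simpa using Finset.sum_le_sum fun k (_ : k ∈ range n) => pow_le_one₀ h0 h1
    have hsum0 : 0 ≤ ∑ k ∈ range n, F a ^ k := sum_nonneg fun k _ => pow_nonneg h0 k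
    rw [Real.norm_of_nonneg (mul_nonneg (hp n) hsum0), mul_comm (n : ℝ)]
    exact mul_le_mul_of_nonneg_left hgeom (hp n)

section RunningMax

variable {Ω : Type*}

theorem runningMax_comp {Ω' : Type*} (ξ : ℕ → Ω → ℝ) (g : Ω' → Ω) (n : ℕ) :
    runningMax (fun k => ξ k ∘ g) n = runningMax ξ n ∘ g := by
  induction n with
  | zero => rfl
  | succ n ih => funext ω; simp only [runningMax, ih, Function.comp_apply]

theorem runningMax_le_iff (ξ : ℕ → Ω → ℝ) {x : ℝ} (hx : 0 ≤ x) (n : ℕ) (ω : Ω) :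
    runningMax ξ n ω ≤ x ↔ ∀ k ∈ Icc 1 n, ξ k ω ≤ x := by
  induction n with
  | zero => simpa [runningMax] using hx
  | succ n ih =>
    rw [← insert_Icc_right_eq_Icc_add_one (by omega)]
    simp only [runningMax, max_le_iff, ih, forall_mem_insert]
    tauto

variable [MeasurableSpace Ω]

theorem measurable_runningMax {ξ : ℕ → Ω → ℝ} (hξ : ∀ k, Measurable (ξ k)) (n : ℕ) :
    Measurable (runningMax ξ n) := by
  induction n with
  | zero => exact measurable_const
  | succ n ih => exact ih.max (hξ (n + 1))

theorem measure_runningMax_le (μ : Measure Ω) {ξ : ℕ → Ω → ℝ} (hmeas : ∀ k, Measurable (ξ k))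
    (hindep : iIndepFun ξ μ)
    (hident : ∀ k : ℕ, 1 ≤ k → Measure.map (ξ k) μ = Measure.map (ξ 1) μ)
    {x : ℝ} (hx : 0 ≤ x) (n : ℕ) :
    μ {ω | runningMax ξ n ω ≤ x} = μ {ω | ξ 1 ω ≤ x} ^ n := by
  have hset : {ω | runningMax ξ n ω ≤ x} = ⋂ k ∈ Icc 1 n, ξ k ⁻¹' Set.Iic x := by
    ext ω
    simpa using runningMax_le_iff ξ hx n ω
  have hfactor : ∀ k ∈ Icc 1 n, μ (ξ k ⁻¹' Set.Iic x) = μ {ω | ξ 1 ω ≤ x} := fun k hk => by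
    rw [← Measure.map_apply (hmeas k) measurableSet_Iic, hident k (mem_Icc.1 hk).1,
      Measure.map_apply (hmeas 1) measurableSet_Iic]
    rfl
  rw [hset, hindep.measure_inter_preimage_eq_mul _ fun _ _ => measurableSet_Iic,
    prod_congr rfl hfactor, prod_const, Nat.card_Icc, Nat.add_sub_cancel]

end RunningMax

theorem ProbabilityTheory.IndepFun.measure_setOf_mem_eq_tsum {Ω β : Type*} [MeasurableSpace Ω] [MeasurableSpace β]
    {μ : Measure Ω} {η : Ω → ℕ} {X : Ω → β} (hind : IndepFun η X μ) (hη : Measurable η)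
    (hX : Measurable X) {S : ℕ → Set β} (hS : ∀ n, MeasurableSet (S n)) :
    μ {ω | X ω ∈ S (η ω)} = ∑' n, μ {ω | η ω = n} * μ (X ⁻¹' S n) := by
  have hunion : {ω | X ω ∈ S (η ω)} = ⋃ n, η ⁻¹' {n} ∩ X ⁻¹' S n := by
    ext ω
    simp
  have hdisj : Pairwise (Function.onFun Disjoint fun n => η ⁻¹' {n} ∩ X ⁻¹' S n) :=
    fun i j hij =>
      ((Set.disjoint_singleton.2 hij).preimage η).mono Set.inter_subset_left Set.inter_subset_left
  rw [hunion, measure_iUnion hdisj fun n => (hη (measurableSet_singleton n)).inter (hX (hS n))]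
  exact tsum_congr fun n =>
    hind.measure_inter_preimage_eq_mul _ _ (measurableSet_singleton n) (hS n)

section StoppedMax

variable {Ω : Type*} [MeasurableSpace Ω] (μ : Measure Ω) [IsProbabilityMeasure μ]
  {ξ : ℕ → Ω → ℝ} {η : Ω → ℕ}

theorem measure_runningMax_stopped_gt (hmeas : ∀ k, Measurable (ξ k)) (hindep : iIndepFun ξ μ)
    (hident : ∀ k : ℕ, 1 ≤ k → Measure.map (ξ k) μ = Measure.map (ξ 1) μ)
    (hηmeas : Measurable η) (hηindep : IndepFun η (fun ω => fun k => ξ k ω) μ)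
    {x : ℝ} (hx : 0 ≤ x) :
    μ {ω | x < runningMax ξ (η ω) ω} =
      ∑' n, μ {ω | η ω = n} * (1 - μ {ω | ξ 1 ω ≤ x} ^ n) := by
  let S : ℕ → Set (ℕ → ℝ) := fun n => {u | x < runningMax (fun k u => u k) n u}
  have hS : ∀ n, MeasurableSet (S n) := fun n =>
    measurable_runningMax (fun k => measurable_pi_apply k) n measurableSet_Ioi
  have hpath : ∀ n ω, runningMax (fun k (u : ℕ → ℝ) => u k) n (fun k => ξ k ω) =
      runningMax ξ n ω := fun n ω => (congrFun (runningMax_comp _ (fun ω k => ξ k ω) n) ω).symm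
  have hdecomp := hηindep.measure_setOf_mem_eq_tsum hηmeas (measurable_pi_lambda _ hmeas) hS
  simp only [S, Set.preimage_ofPred_eq, Set.mem_ofPred_eq, hpath] at hdecomp
  refine hdecomp.trans (tsum_congr fun n => ?_)
  have hle : MeasurableSet {ω | runningMax ξ n ω ≤ x} :=
    measurableSet_le (measurable_runningMax hmeas n) measurable_const
  rw [← measure_runningMax_le μ hmeas hindep hident hx n, ← prob_compl_eq_one_sub hle]
  simp only [Set.compl_ofPred, not_le]

theorem tendsto_measure_runningMax_stopped_gt_div (hmeas : ∀ k, Measurable (ξ k))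
    (hindep : iIndepFun ξ μ)
    (hident : ∀ k : ℕ, 1 ≤ k → Measure.map (ξ k) μ = Measure.map (ξ 1) μ)
    (hηmeas : Measurable η) (hηindep : IndepFun η (fun ω => fun k => ξ k ω) μ)
    (hpos : ∀ x : ℝ, 0 < (μ {ω | ξ 1 ω > x}).toReal)
    (hmean : Summable (fun n : ℕ => (n : ℝ) * (μ {ω | η ω = n}).toReal)) :
    Tendsto (fun x => (μ {ω | x < runningMax ξ (η ω) ω}).toReal / (μ {ω | x < ξ 1 ω}).toReal)
      atTop (𝓝 (∑' n : ℕ, (n : ℝ) * (μ {ω | η ω = n}).toReal)) := by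
  have := Measure.isProbabilityMeasure_map (μ := μ) (hmeas 1).aemeasurable
  set F := cdf (μ.map (ξ 1))
  have hF : ∀ x, (μ {ω | ξ 1 ω ≤ x}).toReal = F x := fun x => by
    rw [cdf_eq_real, map_measureReal_apply (hmeas 1) measurableSet_Iic]
    rfl
  have htail : ∀ x, (μ {ω | x < ξ 1 ω}).toReal = 1 - F x := fun x => by
    rw [← hF, ← measureReal_def, ← measureReal_def, ← probReal_compl_eq_one_sub
      (measurableSet_le (hmeas 1) measurable_const)]
    simp only [Set.compl_ofPred, not_le]
  have hratio : ∀ x, 0 ≤ x → (μ {ω | x < runningMax ξ (η ω) ω}).toReal / (1 - F x) =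
      ∑' n, (μ {ω | η ω = n}).toReal * ∑ k ∈ range n, F x ^ k := fun x hx => by
    rw [measure_runningMax_stopped_gt μ hmeas hindep hident hηmeas hηindep hx,
      ENNReal.tsum_toReal_eq fun n => ENNReal.mul_ne_top (measure_ne_top μ _) (by simp),
      div_eq_iff (htail x ▸ (hpos x).ne'), ← tsum_mul_right]
    refine tsum_congr fun n => ?_
    rw [ENNReal.toReal_mul, ENNReal.toReal_sub_of_le (pow_le_one' prob_le_one n) ENNReal.one_ne_top,
      ENNReal.toReal_pow, hF, ENNReal.toReal_one, mul_assoc, geom_sum_mul_neg]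
  simp only [htail]
  refine (tendsto_tsum_mul_geom_sum (fun n => ENNReal.toReal_nonneg) hmean
    (fun x => ⟨cdf_nonneg _ x, cdf_le_one _ x⟩) (tendsto_cdf_atTop (μ.map (ξ 1)))).congr' ?_
  filter_upwards [eventually_ge_atTop 0] with x hx
  exact (hratio x hx).symm

theorem tsum_mul_measure_eq_pos (hηmeas : Measurable η) (hηnondeg : μ {ω | η ω = 0} ≠ 1)
    (hmean : Summable (fun n : ℕ => (n : ℝ) * (μ {ω | η ω = n}).toReal)) :
    0 < ∑' n : ℕ, (n : ℝ) * (μ {ω | η ω = n}).toReal := by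
  obtain ⟨n, hn⟩ : ∃ n, μ {ω | η ω = n + 1} ≠ 0 := by
    by_contra! h
    refine hηnondeg ((prob_compl_eq_zero_iff (hηmeas (measurableSet_singleton 0))).1 ?_)
    refine measure_mono_null (fun ω hω => ?_) (measure_iUnion_null h)
    obtain ⟨n, hn⟩ := Nat.exists_eq_add_one.2 (Nat.pos_of_ne_zero hω)
    exact Set.mem_iUnion.2 ⟨n, hn⟩
  refine hmean.tsum_pos (fun n => by positivity) (n + 1) (mul_pos (by positivity) ?_)
  exact ENNReal.toReal_pos hn (measure_ne_top μ _)

end StoppedMax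

/-- Corollary 1: for i.i.d. random variables with common d.f. in `𝒞` and a counting
random variable `η` with finite mean, the randomly stopped maximum has a consistently
varying tail. -/
theorem randomly_stopped_maximum_cvar_iid
    {Ω : Type*} [MeasurableSpace Ω] (μ : Measure Ω) [IsProbabilityMeasure μ]
    (ξ : ℕ → Ω → ℝ) (hmeas : ∀ k, Measurable (ξ k))
    (hindep : iIndepFun ξ μ)
    (hident : ∀ k : ℕ, 1 ≤ k → Measure.map (ξ k) μ = Measure.map (ξ 1) μ)
    (η : Ω → ℕ) (hηmeas : Measurable η)
    (hηnondeg : μ {ω | η ω = 0} ≠ 1)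
    (hηindep : IndepFun η (fun ω => fun k => ξ k ω) μ)
    (hpos : ∀ x : ℝ, 0 < (μ {ω | ξ 1 ω > x}).toReal)
    (hC : ConsistentlyVaryingTail (fun x => (μ {ω | ξ 1 ω > x}).toReal))
    (hmean : Summable (fun n : ℕ => (n : ℝ) * (μ {ω | η ω = n}).toReal)) :
    ConsistentlyVaryingTail (fun x => (μ {ω | runningMax ξ (η ω) ω > x}).toReal) :=
  hC.of_tendsto_div (tsum_mul_measure_eq_pos μ hηmeas hηnondeg hmean).ne'
    (tendsto_measure_runningMax_stopped_gt_div μ hmeas hindep hident hηmeas hηindep hpos hmean)
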